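/- arXiv:2408.00117 — 2 statements merged into one kernel-verified Lean document; each statement's English description precedes it below -/
import Mathlib

section
/- Let P be a real n×d matrix, b ∈ ℝⁿ, and l, u ∈ ℝᵈ with l ≤ u componentwise. Then the axis-aligned hyper-rectangle B = {x ∈ ℝᵈ | l ≤ x ≤ u} is contained in the polytope C = {x ∈ ℝᵈ | Px ≤ b} if and only if for every i = 1,…,n, Σ_{j=1}^{d} (max(P_{ij},0)·u_j − max(−P_{ij},0)·l_j) ≤ b_i. -/
/-!
The linear form `x ↦ a ⬝ᵥ x` is separable, so its maximum over the box `[l, u]` is taken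
coordinatewise: at `u j` where `a j ≥ 0` and at `l j` where `a j < 0`. The maximum is therefore
the support value `∑ j, (a j)⁺ u j - (a j)⁻ l j`, and the box lies in the half-space
`a ⬝ᵥ x ≤ c` iff this value is at most `c`. The polytope is an intersection of such half-spaces.
-/

open Matrix

section

variable {α ι : Type*} [LinearOrder α]

def boxMaximizer [Zero α] (a l u : ι → α) : ι → α :=
  fun j => if 0 ≤ a j then u j else l j

theorem boxMaximizer_mem_Icc [Zero α] {l u : ι → α} (hlu : l ≤ u) (a : ι → α) :
    boxMaximizer a l u ∈ Set.Icc l u := by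
  constructor <;> intro j <;> by_cases ha : 0 ≤ a j <;> simp [boxMaximizer, ha, hlu j]

variable [Ring α] [Fintype ι]

def boxSupport (a l u : ι → α) : α :=
  ∑ j, (max (a j) 0 * u j - max (-a j) 0 * l j)

variable [IsOrderedRing α]

theorem mul_le_max_mul_sub_max_mul {a l x u : α} (hl : l ≤ x) (hu : x ≤ u) :
    a * x ≤ max a 0 * u - max (-a) 0 * l := by
  rcases le_total 0 a with ha | ha
  · simpa [max_eq_left ha, max_eq_right (neg_nonpos.mpr ha)] using
      mul_le_mul_of_nonneg_left hu ha
  · simpa [max_eq_right ha, max_eq_left (neg_nonneg.mpr ha)] using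
      mul_le_mul_of_nonpos_left hl ha

theorem mul_ite_nonneg_eq_max_mul_sub_max_mul (a l u : α) :
    a * (if 0 ≤ a then u else l) = max a 0 * u - max (-a) 0 * l := by
  rcases le_or_gt 0 a with ha | ha
  · simp [ha]
  · simp [ha.not_ge, max_eq_right ha.le, max_eq_left (neg_nonneg.mpr ha.le)]

theorem dotProduct_boxMaximizer (a l u : ι → α) :
    a ⬝ᵥ boxMaximizer a l u = boxSupport a l u :=
  Finset.sum_congr rfl fun j _ => mul_ite_nonneg_eq_max_mul_sub_max_mul (a j) (l j) (u j)

theorem dotProduct_le_boxSupport {a l u x : ι → α} (hx : x ∈ Set.Icc l u) :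
    a ⬝ᵥ x ≤ boxSupport a l u :=
  Finset.sum_le_sum fun j _ => mul_le_max_mul_sub_max_mul (hx.1 j) (hx.2 j)

theorem isGreatest_dotProduct_image_Icc {l u : ι → α} (hlu : l ≤ u) (a : ι → α) :
    IsGreatest ((a ⬝ᵥ ·) '' Set.Icc l u) (boxSupport a l u) :=
  ⟨⟨_, boxMaximizer_mem_Icc hlu a, dotProduct_boxMaximizer a l u⟩,
    Set.forall_mem_image.mpr fun _ hx => dotProduct_le_boxSupport hx⟩

theorem forall_mem_Icc_dotProduct_le_iff {l u : ι → α} (hlu : l ≤ u) (a : ι → α) (c : α) :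
    (∀ x ∈ Set.Icc l u, a ⬝ᵥ x ≤ c) ↔ boxSupport a l u ≤ c := by
  rw [isLUB_le_iff (isGreatest_dotProduct_image_Icc hlu a).isLUB, mem_upperBounds,
    Set.forall_mem_image]

end

/-- Behroozi's criterion: the axis-aligned hyper-rectangle `{x | l ≤ x ≤ u}` is contained in
the polytope `{x | P x ≤ b}` iff `∑ j (P i j)⁺ * u j - (P i j)⁻ * l j ≤ b i` for every row `i`. -/
theorem rect_subset_polytope_iff {n d : ℕ} (P : Matrix (Fin n) (Fin d) ℝ) (b : Fin n → ℝ)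
    (l u : Fin d → ℝ) (hlu : l ≤ u) :
    {x : Fin d → ℝ | ∀ j, l j ≤ x j ∧ x j ≤ u j} ⊆
        {x : Fin d → ℝ | ∀ i, P.mulVec x i ≤ b i} ↔
      ∀ i, ∑ j, (max (P i j) 0 * u j - max (-(P i j)) 0 * l j) ≤ b i := by
  have hbox : {x : Fin d → ℝ | ∀ j, l j ≤ x j ∧ x j ≤ u j} = Set.Icc l u := by
    ext x
    simp only [Set.mem_ofPred_eq, Set.mem_Icc, Pi.le_def, forall_and]
  rw [hbox]
  exact ⟨fun h i => (forall_mem_Icc_dotProduct_le_iff hlu (P i) (b i)).mp fun x hx => h hx i,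
    fun h x hx i => (forall_mem_Icc_dotProduct_le_iff hlu (P i) (b i)).mpr (h i) x hx⟩
end

section
/- Let g : ℤ → ℝ satisfy g(−t) = g(t) for all t ∈ ℤ (symmetry about 0) and be nonincreasing in distance from 0, i.e., for natural numbers a ≤ b one has g(b) ≤ g(a). Fix δ ∈ ℕ and for c ∈ ℤ define the window sum S(c) = Σ_{j=−δ}^{δ} g(c + j) (the unnormalized output of an average pooling patch of odd length 2δ+1 centered at c). Then for all c₁, c₂ ∈ ℤ, if |c₁| ≤ |c₂| then S(c₂) ≤ S(c₁); i.e., pooling patches whose centers are closer to the peak yield larger (or equal) pooled values. -/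
/-!
Write `S(c)` for the window sum. Sliding the window one step to the right trades `g (c - δ)` for
`g (c + δ + 1)`, and for `c ≥ 0` the new point is at least as far from `0` as the old one, so `S` is
nonincreasing on `ℕ`. An even `g` makes `S` even, hence `S c = S |c|`.
-/

open Finset

lemma apply_le_apply_of_abs_le {M : Type*} [Preorder M] {g : ℤ → M} (hsym : ∀ t : ℤ, g (-t) = g t)
    (hmono : ∀ a b : ℕ, a ≤ b → g (b : ℤ) ≤ g (a : ℤ)) {x y : ℤ} (h : |x| ≤ |y|) :
    g y ≤ g x := by
  have hnatAbs : ∀ t : ℤ, g t = g t.natAbs := fun t ↦ by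
    rcases Int.natAbs_eq t with ht | ht
    · rw [← ht]
    · rw [ht, hsym, Int.natAbs_neg, Int.natAbs_natCast]
  rw [← Int.natCast_natAbs, ← Int.natCast_natAbs, Nat.cast_le] at h
  rw [hnatAbs x, hnatAbs y]
  exact hmono _ _ h

variable {M : Type*} [AddCommMonoid M]

noncomputable def windowSum (g : ℤ → M) (δ : ℕ) (c : ℤ) : M :=
  ∑ j ∈ Icc (-(δ : ℤ)) δ, g (c + j)

lemma windowSum_eq_sum_Icc (g : ℤ → M) (δ : ℕ) (c : ℤ) :
    windowSum g δ c = ∑ k ∈ Icc (c - δ) (c + δ), g k := by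
  rw [windowSum, sub_eq_add_neg, ← map_add_left_Icc, sum_map]
  rfl

lemma sum_Icc_add_one_add (f : ℤ → M) {a b : ℤ} (hab : a ≤ b + 1) :
    ∑ k ∈ Icc (a + 1) (b + 1), f k + f a = ∑ k ∈ Icc a b, f k + f (b + 1) := by
  have hleft : a ∉ Icc (a + 1) (b + 1) := by simp
  have hright : b + 1 ∉ Icc a b := by simp
  rw [add_comm _ (f a), ← sum_insert hleft, insert_Icc_add_one_left_eq_Icc hab,
    add_comm _ (f (b + 1)), ← sum_insert hright, insert_Icc_right_eq_Icc_add_one hab]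

lemma windowSum_add_one_add (g : ℤ → M) (δ : ℕ) (c : ℤ) :
    windowSum g δ (c + 1) + g (c - δ) = windowSum g δ c + g (c + δ + 1) := by
  rw [windowSum_eq_sum_Icc, windowSum_eq_sum_Icc, add_sub_right_comm, add_right_comm c 1 (δ : ℤ)]
  exact sum_Icc_add_one_add g (by omega)

lemma windowSum_neg {g : ℤ → M} (heven : ∀ t, g (-t) = g t) (δ : ℕ) (c : ℤ) :
    windowSum g δ (-c) = windowSum g δ c := by
  refine sum_nbij' Neg.neg Neg.neg ?_ ?_ (fun j _ ↦ neg_neg j) (fun j _ ↦ neg_neg j) ?_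
  · intro j hj
    simp only [mem_Icc] at hj ⊢
    omega
  · intro j hj
    simp only [mem_Icc] at hj ⊢
    omega
  · intro j _
    rw [← heven, neg_add, neg_neg]

lemma windowSum_natAbs {g : ℤ → M} (heven : ∀ t, g (-t) = g t) (δ : ℕ) (c : ℤ) :
    windowSum g δ c.natAbs = windowSum g δ c := by
  rcases abs_choice c with hc | hc <;> rw [Int.natCast_natAbs, hc]
  exact windowSum_neg heven δ c

section RadiallyAntitone

variable [PartialOrder M] [IsOrderedCancelAddMonoid M] {g : ℤ → M}
  (hg : ∀ x y : ℤ, |x| ≤ |y| → g y ≤ g x) (δ : ℕ)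

include hg

lemma windowSum_add_one_le {c : ℤ} (hc : 0 ≤ c) : windowSum g δ (c + 1) ≤ windowSum g δ c := by
  have hfar : g (c + δ + 1) ≤ g (c - δ) := hg _ _ (abs_le_abs (by omega) (by omega))
  refine le_of_add_le_add_right (a := g (c - δ)) ?_
  calc windowSum g δ (c + 1) + g (c - δ) = windowSum g δ c + g (c + δ + 1) :=
        windowSum_add_one_add g δ c
    _ ≤ windowSum g δ c + g (c - δ) := by gcongr

lemma windowSum_natCast_antitone : Antitone fun n : ℕ ↦ windowSum g δ n :=
  antitone_nat_of_succ_le fun n ↦ by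
    simpa using windowSum_add_one_le hg δ (Int.natCast_nonneg n)

lemma windowSum_le_of_abs_le {c₁ c₂ : ℤ} (h : |c₁| ≤ |c₂|) :
    windowSum g δ c₂ ≤ windowSum g δ c₁ := by
  have heven : ∀ t, g (-t) = g t := fun t ↦
    le_antisymm (hg _ _ (abs_neg t).ge) (hg _ _ (abs_neg t).le)
  rw [← Int.natCast_natAbs, ← Int.natCast_natAbs, Nat.cast_le] at h
  rw [← windowSum_natAbs heven δ c₁, ← windowSum_natAbs heven δ c₂]
  exact windowSum_natCast_antitone hg δ h

end RadiallyAntitone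

/-- If `g : ℤ → ℝ` is symmetric about `0` and nonincreasing in distance from `0`, then window
sums of odd length `2δ+1` (unnormalized average-pooling outputs) are larger for patches whose
centers are closer to the peak. -/
theorem window_sum_anti (g : ℤ → ℝ) (hsym : ∀ t : ℤ, g (-t) = g t)
    (hmono : ∀ a b : ℕ, a ≤ b → g (b : ℤ) ≤ g (a : ℤ)) (δ : ℕ)
    (c₁ c₂ : ℤ) (h : |c₁| ≤ |c₂|) :
    ∑ j ∈ Finset.Icc (-(δ : ℤ)) (δ : ℤ), g (c₂ + j) ≤
      ∑ j ∈ Finset.Icc (-(δ : ℤ)) (δ : ℤ), g (c₁ + j) :=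
  windowSum_le_of_abs_le (fun _ _ ↦ apply_le_apply_of_abs_le hsym hmono) δ h
end
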